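/- arXiv:1107.5988 — 2 statements merged into one kernel-verified Lean document; each statement's English description precedes it below -/
import Mathlib

section
/- A point a* ∈ ℝ^N is a global minimizer of the BPDN objective V if and only if for every index n the following holds: if a*_n ≠ 0 then Φ_nᵀ(y − Φa*) = λ·sign(a*_n), and if a*_n = 0 then |Φ_nᵀ(y − Φa*)| ≤ λ. -/
/-!
Expanding the square around `a*` gives, with `c = Φᵀ(y − Φa*)`,
`V(b) = V(a*) − ⟪c, b − a*⟫ + ½‖Φ(b − a*)‖² + λ(‖b‖₁ − ‖a*‖₁)`.
If every `cₙ` is a subgradient of `λ|·|` at `a*ₙ`, the linear term is dominated by the `ℓ¹`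
term, so `a*` is a minimizer. Conversely, moving `a*` along the `n`-th coordinate by `t`
changes `V` by `−cₙt + O(t²) + λ(|a*ₙ + t| − |a*ₙ|)`; since this is nonnegative, comparing
first-order terms as `t → 0±` forces `cₙ` to be such a subgradient.
-/

open Matrix

/-- The BPDN objective `V(a) = (1/2)‖y − Φa‖₂² + λ‖a‖₁`. -/
noncomputable def bpdn {M N : ℕ} (Φ : Matrix (Fin M) (Fin N) ℝ)
    (y : Fin M → ℝ) (lam : ℝ) (a : Fin N → ℝ) : ℝ :=
  (1 / 2) * ∑ m, (y m - (Φ *ᵥ a) m) ^ 2 + lam * ∑ n, |a n|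

open Filter Topology

/-- For `0 ≤ lam`, this says `c ∈ ∂(lam * |·|)(x)`. -/
def IsAbsSubgradient (lam x c : ℝ) : Prop :=
  (x ≠ 0 → c = lam * Real.sign x) ∧ (x = 0 → |c| ≤ lam)

theorem IsAbsSubgradient.mul_sub_le {lam x c : ℝ} (h : IsAbsSubgradient lam x c)
    (hlam : 0 ≤ lam) (z : ℝ) : c * (z - x) ≤ lam * (|z| - |x|) := by
  by_cases hx : x = 0
  · subst hx
    calc c * (z - 0) ≤ |c| * |z| := by rw [sub_zero, ← abs_mul]; exact le_abs_self _
      _ ≤ lam * (|z| - |0|) := by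
        rw [abs_zero, sub_zero]; exact mul_le_mul_of_nonneg_right (h.2 rfl) (abs_nonneg z)
  · rw [h.1 hx]
    rcases lt_or_gt_of_ne hx with hneg | hpos
    · rw [Real.sign_of_neg hneg, abs_of_neg hneg]
      nlinarith [neg_abs_le z]
    · rw [Real.sign_of_pos hpos, abs_of_pos hpos]
      nlinarith [le_abs_self z]

theorem nonneg_of_eventually_nonneg_mul_add_mul_sq {α β : ℝ}
    (h : ∀ᶠ t in 𝓝[>] 0, 0 ≤ α * t + β * t ^ 2) : 0 ≤ α := by
  have hlim : Tendsto (fun t => α + β * t) (𝓝[>] 0) (𝓝 α) := by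
    refine tendsto_nhdsWithin_of_tendsto_nhds ?_
    exact (continuous_const.add (continuous_const.mul continuous_id)).tendsto' 0 α (by simp)
  refine ge_of_tendsto hlim ?_
  filter_upwards [h, self_mem_nhdsWithin] with t ht (htpos : 0 < t)
  exact nonneg_of_mul_nonneg_right (by linear_combination ht) htpos

theorem abs_add_sub_abs_eq_sign_mul {x t : ℝ} (ht : |t| ≤ |x|) :
    |x + t| - |x| = Real.sign x * t := by
  rcases lt_trichotomy x 0 with hneg | rfl | hpos
  · rw [abs_of_neg hneg] at ht
    rw [Real.sign_of_neg hneg, abs_of_neg hneg, abs_of_nonpos (by linarith [le_abs_self t])]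
    ring
  · simp_all
  · rw [abs_of_pos hpos] at ht
    rw [Real.sign_of_pos hpos, abs_of_pos hpos, abs_of_nonneg (by linarith [neg_abs_le t])]
    ring

theorem isAbsSubgradient_of_forall_nonneg {lam x c K : ℝ}
    (h : ∀ t, 0 ≤ -c * t + K * t ^ 2 + lam * (|x + t| - |x|)) :
    IsAbsSubgradient lam x c := by
  constructor
  · intro hx
    have hnear : Set.Ioo 0 |x| ∈ 𝓝[>] 0 := Ioo_mem_nhdsGT (abs_pos.mpr hx)
    have hright : 0 ≤ lam * Real.sign x - c := by
      refine nonneg_of_eventually_nonneg_mul_add_mul_sq (β := K) ?_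
      filter_upwards [hnear] with t ⟨ht0, htx⟩
      have := h t
      rw [abs_add_sub_abs_eq_sign_mul (by rw [abs_of_pos ht0]; exact htx.le)] at this
      linarith
    have hleft : 0 ≤ c - lam * Real.sign x := by
      refine nonneg_of_eventually_nonneg_mul_add_mul_sq (β := K) ?_
      filter_upwards [hnear] with t ⟨ht0, htx⟩
      have := h (-t)
      rw [abs_add_sub_abs_eq_sign_mul (by rw [abs_neg, abs_of_pos ht0]; exact htx.le)] at this
      linarith
    linarith
  · rintro rfl
    have hright : 0 ≤ lam - c := by
      refine nonneg_of_eventually_nonneg_mul_add_mul_sq (β := K) ?_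
      filter_upwards [self_mem_nhdsWithin] with t (ht : 0 < t)
      have := h t
      rw [zero_add, abs_zero, sub_zero, abs_of_pos ht] at this
      linarith
    have hleft : 0 ≤ lam + c := by
      refine nonneg_of_eventually_nonneg_mul_add_mul_sq (β := K) ?_
      filter_upwards [self_mem_nhdsWithin] with t (ht : 0 < t)
      have := h (-t)
      rw [zero_add, abs_zero, sub_zero, abs_neg, abs_of_pos ht] at this
      linarith
    exact abs_le.mpr ⟨by linarith, by linarith⟩

theorem bpdn_eq_sub_add {M N : ℕ} (Φ : Matrix (Fin M) (Fin N) ℝ) (y : Fin M → ℝ) (lam : ℝ)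
    (a b : Fin N → ℝ) :
    bpdn Φ y lam b = bpdn Φ y lam a - (Φᵀ *ᵥ (y - Φ *ᵥ a)) ⬝ᵥ (b - a)
      + (1 / 2) * ∑ m, (Φ *ᵥ (b - a)) m ^ 2 + lam * (∑ n, |b n| - ∑ n, |a n|) := by
  set r := y - Φ *ᵥ a
  set u := Φ *ᵥ (b - a)
  have hres : ∀ m, y m - (Φ *ᵥ b) m = r m - u m := fun m => by
    simp only [r, u, mulVec_sub, Pi.sub_apply]; ring
  have hlin : (Φᵀ *ᵥ r) ⬝ᵥ (b - a) = ∑ m, r m * u m := by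
    rw [mulVec_transpose, ← dotProduct_mulVec]; rfl
  have hsq : ∑ m, (r m - u m) ^ 2 = ∑ m, r m ^ 2 - 2 * ∑ m, r m * u m + ∑ m, u m ^ 2 := by
    rw [Finset.mul_sum, ← Finset.sum_sub_distrib, ← Finset.sum_add_distrib]
    exact Finset.sum_congr rfl fun m _ => by ring
  have ha : bpdn Φ y lam a = (1 / 2) * ∑ m, r m ^ 2 + lam * ∑ n, |a n| := rfl
  have hb : bpdn Φ y lam b = (1 / 2) * ∑ m, (r m - u m) ^ 2 + lam * ∑ n, |b n| := by
    simp only [bpdn, hres]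
  rw [ha, hb, hsq, hlin]
  ring

theorem bpdn_add_single {M N : ℕ} (Φ : Matrix (Fin M) (Fin N) ℝ) (y : Fin M → ℝ) (lam : ℝ)
    (a : Fin N → ℝ) (n : Fin N) (t : ℝ) :
    bpdn Φ y lam (a + Pi.single n t) = bpdn Φ y lam a - (Φᵀ *ᵥ (y - Φ *ᵥ a)) n * t
      + (1 / 2) * (∑ m, Φ m n ^ 2) * t ^ 2 + lam * (|a n + t| - |a n|) := by
  have hnorm : ∑ k, |(a + Pi.single n t : Fin N → ℝ) k| - ∑ k, |a k| = |a n + t| - |a n| := by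
    rw [← Finset.sum_sub_distrib, Fintype.sum_eq_single n fun k hk => by
      simp [Pi.single_eq_of_ne hk]]
    simp
  have hcol : ∀ m, (Φ *ᵥ Pi.single n t) m = Φ m n * t := fun m => dotProduct_single _ _ _
  rw [bpdn_eq_sub_add Φ y lam a, add_sub_cancel_left, dotProduct_single, hnorm]
  simp only [hcol, mul_pow, ← Finset.sum_mul]
  ring

theorem stmt2_general {M N : ℕ}
    (Φ : Matrix (Fin M) (Fin N) ℝ) (y : Fin M → ℝ)
    (lam : ℝ) (hlam : 0 < lam) (astar : Fin N → ℝ) :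
    (∀ a : Fin N → ℝ, bpdn Φ y lam astar ≤ bpdn Φ y lam a) ↔
      (∀ n : Fin N,
        (astar n ≠ 0 →
          (Φᵀ *ᵥ (y - Φ *ᵥ astar)) n = lam * Real.sign (astar n)) ∧
        (astar n = 0 →
          |(Φᵀ *ᵥ (y - Φ *ᵥ astar)) n| ≤ lam)) := by
  set c := Φᵀ *ᵥ (y - Φ *ᵥ astar)
  change _ ↔ ∀ n, IsAbsSubgradient lam (astar n) (c n)
  constructor
  · intro hmin n
    refine isAbsSubgradient_of_forall_nonneg (K := (1 / 2) * ∑ m, Φ m n ^ 2) fun t => ?_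
    have := hmin (astar + Pi.single n t)
    rw [bpdn_add_single] at this
    linarith
  · intro hsub a
    have hlin : c ⬝ᵥ (a - astar) ≤ lam * (∑ n, |a n| - ∑ n, |astar n|) := by
      rw [mul_sub, Finset.mul_sum, Finset.mul_sum, ← Finset.sum_sub_distrib]
      refine Finset.sum_le_sum fun n _ => ?_
      rw [← mul_sub]
      exact (hsub n).mul_sub_le hlam.le (a n)
    have hsq : 0 ≤ ∑ m, (Φ *ᵥ (a - astar)) m ^ 2 := Finset.sum_nonneg fun m _ => sq_nonneg _
    rw [bpdn_eq_sub_add Φ y lam astar a]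
    linarith

/-- `a*` is a global minimizer of the BPDN objective `V` iff for
every index `n`: if `a*_n ≠ 0` then `Φ_nᵀ(y − Φa*) = λ · sign(a*_n)`, and if
`a*_n = 0` then `|Φ_nᵀ(y − Φa*)| ≤ λ`. -/
theorem stmt2 {M N : ℕ} (hM : 0 < M) (hN : 0 < N)
    (Φ : Matrix (Fin M) (Fin N) ℝ) (y : Fin M → ℝ)
    (lam : ℝ) (hlam : 0 < lam) (astar : Fin N → ℝ) :
    (∀ a : Fin N → ℝ, bpdn Φ y lam astar ≤ bpdn Φ y lam a) ↔
      (∀ n : Fin N,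
        (astar n ≠ 0 →
          (Φᵀ *ᵥ (y - Φ *ᵥ astar)) n = lam * Real.sign (astar n)) ∧
        (astar n = 0 →
          |(Φᵀ *ᵥ (y - Φ *ᵥ astar)) n| ≤ lam)) :=
  stmt2_general Φ y lam hlam astar
end

section
/- Let S ⊆ {1,…,N}, δ ≥ 0, and α > 0 with αδ < 1, and suppose (1 − δ)‖x‖₂² ≤ ‖Φx‖₂² ≤ (1 + δ)‖x‖₂² for all x ∈ ℝ^N supported on S. Then for any vectors ũ, ã ∈ ℝ^N both supported on S with ‖ã‖₂ ≤ α·‖ũ‖₂, one has ũᵀ(ũ + (ΦᵀΦ − I)ã) ≥ (1 − αδ)·‖ũ‖₂². Consequently, along such a trajectory the energy E = (1/2)‖ũ‖₂² with τ·ũ̇ = −ũ − (ΦᵀΦ − I)ã satisfies the dissipation bound Ė ≤ −(2/τ)(1 − αδ)E. -/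
/-!
With `G = ΦᵀΦ − 1`, the restricted isometry bound says `|xᵀGx| ≤ δ‖x‖²` for `x` supported
on `S`. Since `G` is symmetric, polarization turns this into `|uᵀGa| ≤ (δ/2)(‖u‖² + ‖a‖²)`,
and applying it to `u` and `a/α` gives `|uᵀGa| ≤ αδ‖u‖²` when `‖a‖ ≤ α‖u‖`; hence
`uᵀ(u + Ga) ≥ (1 − αδ)‖u‖²`. Along the flow `τu̇ = −u − Ga` one has
`Ė = uᵀu̇ = −τ⁻¹ uᵀ(u + Ga)`, which gives the dissipation bound.
-/

open Matrix

namespace Matrix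

variable {ι : Type*} [Fintype ι]

lemma sum_sq_eq_dotProduct_self (x : ι → ℝ) : ∑ i, x i ^ 2 = x ⬝ᵥ x := by
  simp only [dotProduct, sq]

lemma IsSymm.dotProduct_mulVec_comm {A : Matrix ι ι ℝ} (hA : A.IsSymm) (x y : ι → ℝ) :
    x ⬝ᵥ A *ᵥ y = y ⬝ᵥ A *ᵥ x := by
  rw [dotProduct_mulVec, dotProduct_comm, ← vecMul_transpose, hA.eq]

section SymmetricForm

variable {A : Matrix ι ι ℝ} {W : Submodule ℝ (ι → ℝ)} {δ : ℝ}

lemma IsSymm.abs_dotProduct_mulVec_le (hA : A.IsSymm)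
    (hW : ∀ x ∈ W, |x ⬝ᵥ A *ᵥ x| ≤ δ * (x ⬝ᵥ x)) {x y : ι → ℝ} (hx : x ∈ W) (hy : y ∈ W) :
    |x ⬝ᵥ A *ᵥ y| ≤ δ / 2 * (x ⬝ᵥ x + y ⬝ᵥ y) := by
  have hadd := abs_le.mp (hW _ (W.add_mem hx hy))
  have hsub := abs_le.mp (hW _ (W.sub_mem hx hy))
  have hyx := hA.dotProduct_mulVec_comm y x
  simp only [mulVec_add, mulVec_sub, dotProduct_add, add_dotProduct, dotProduct_sub,
    sub_dotProduct, dotProduct_comm y x] at hadd hsub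
  rw [abs_le]
  constructor <;> nlinarith

lemma IsSymm.le_dotProduct_add_mulVec (hA : A.IsSymm)
    (hW : ∀ x ∈ W, |x ⬝ᵥ A *ᵥ x| ≤ δ * (x ⬝ᵥ x)) (hδ : 0 ≤ δ) {α : ℝ} (hα : 0 < α)
    {u w : ι → ℝ} (hu : u ∈ W) (hw : w ∈ W) (hwu : w ⬝ᵥ w ≤ α ^ 2 * (u ⬝ᵥ u)) :
    (1 - α * δ) * (u ⬝ᵥ u) ≤ u ⬝ᵥ (u + A *ᵥ w) := by
  have h := hA.abs_dotProduct_mulVec_le hW hu (W.smul_mem α⁻¹ hw)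
  simp only [mulVec_smul, dotProduct_smul, smul_dotProduct, smul_eq_mul, abs_mul,
    abs_inv, abs_of_pos hα] at h
  have hscaled : α⁻¹ * (α⁻¹ * (w ⬝ᵥ w)) ≤ u ⬝ᵥ u := by
    rw [← mul_assoc, ← mul_inv, ← sq]
    exact (inv_mul_le_iff₀ (by positivity)).mpr hwu
  have hbound : |u ⬝ᵥ A *ᵥ w| ≤ α * δ * (u ⬝ᵥ u) := by
    calc |u ⬝ᵥ A *ᵥ w| = α * (α⁻¹ * |u ⬝ᵥ A *ᵥ w|) := by field_simp
      _ ≤ α * (δ / 2 * (u ⬝ᵥ u + u ⬝ᵥ u)) :=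
          mul_le_mul_of_nonneg_left (h.trans (by gcongr)) hα.le
      _ = α * δ * (u ⬝ᵥ u) := by ring
  rw [dotProduct_add]
  nlinarith [neg_abs_le (u ⬝ᵥ A *ᵥ w)]

end SymmetricForm

lemma dotProduct_gram_sub_one_mulVec [DecidableEq ι] {m : Type*} [Fintype m]
    (Φ : Matrix m ι ℝ) (x : ι → ℝ) :
    x ⬝ᵥ (Φᵀ * Φ - 1) *ᵥ x = Φ *ᵥ x ⬝ᵥ Φ *ᵥ x - x ⬝ᵥ x := by
  rw [sub_mulVec, one_mulVec, dotProduct_sub, ← mulVec_mulVec, dotProduct_mulVec,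
    vecMul_transpose]

lemma abs_dotProduct_gram_sub_one_mulVec_le [DecidableEq ι] {m : Type*} [Fintype m]
    {Φ : Matrix m ι ℝ} {δ : ℝ} {x : ι → ℝ}
    (h : (1 - δ) * (x ⬝ᵥ x) ≤ Φ *ᵥ x ⬝ᵥ Φ *ᵥ x ∧ Φ *ᵥ x ⬝ᵥ Φ *ᵥ x ≤ (1 + δ) * (x ⬝ᵥ x)) :
    |x ⬝ᵥ (Φᵀ * Φ - 1) *ᵥ x| ≤ δ * (x ⬝ᵥ x) := by
  rw [dotProduct_gram_sub_one_mulVec, abs_le]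
  constructor <;> linarith [h.1, h.2]

lemma dotProduct_eq_of_smul_eq_neg_sub {τ : ℝ} (hτ : τ ≠ 0) {u v g : ι → ℝ}
    (hv : τ • v = -u - g) : u ⬝ᵥ v = -τ⁻¹ * (u ⬝ᵥ (u + g)) := by
  rw [← inv_smul_smul₀ hτ v, hv, dotProduct_smul, smul_eq_mul, neg_sub_left, dotProduct_neg,
    mul_neg, neg_mul, add_comm g u]

end Matrix

lemma hasDerivAt_half_sum_sq {ι : Type*} [Fintype ι] {u : ℝ → ι → ℝ} {u' : ι → ℝ} {t : ℝ}
    (hu : HasDerivAt u u' t) :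
    HasDerivAt (fun s => 1 / 2 * ∑ i, u s i ^ 2) (∑ i, u t i * u' i) t := by
  have h := (HasDerivAt.fun_sum (u := Finset.univ) fun i _ =>
    (hasDerivAt_pi.mp hu i).fun_pow 2).const_mul (1 / 2)
  refine h.congr_deriv ?_
  rw [Finset.mul_sum]
  refine Finset.sum_congr rfl fun i _ => ?_
  norm_num
  ring

theorem stmt15_general {M N : ℕ}
    (Φ : Matrix (Fin M) (Fin N) ℝ) (τ : ℝ) (hτ : 0 < τ)
    (S : Set (Fin N)) (δ α : ℝ) (hδ : 0 ≤ δ) (hα : 0 < α)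
    (hRIP : ∀ x : Fin N → ℝ, (∀ n : Fin N, n ∉ S → x n = 0) →
      (1 - δ) * ∑ n, x n ^ 2 ≤ ∑ m, ((Φ *ᵥ x) m) ^ 2 ∧
        ∑ m, ((Φ *ᵥ x) m) ^ 2 ≤ (1 + δ) * ∑ n, x n ^ 2) :
    (∀ utilde atilde : Fin N → ℝ,
      (∀ n : Fin N, n ∉ S → utilde n = 0) →
      (∀ n : Fin N, n ∉ S → atilde n = 0) →
      Real.sqrt (∑ n, atilde n ^ 2) ≤ α * Real.sqrt (∑ n, utilde n ^ 2) →
      (1 - α * δ) * ∑ n, utilde n ^ 2 ≤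
        utilde ⬝ᵥ (utilde + (Φᵀ * Φ - 1) *ᵥ atilde))
    ∧
    (∀ utilde utilde' atilde : ℝ → Fin N → ℝ,
      (∀ t : ℝ, HasDerivAt utilde (utilde' t) t) →
      (∀ t : ℝ, τ • utilde' t = -(utilde t) - (Φᵀ * Φ - 1) *ᵥ atilde t) →
      (∀ t : ℝ, ∀ n : Fin N, n ∉ S → utilde t n = 0) →
      (∀ t : ℝ, ∀ n : Fin N, n ∉ S → atilde t n = 0) →
      (∀ t : ℝ, Real.sqrt (∑ n, atilde t n ^ 2) ≤
        α * Real.sqrt (∑ n, utilde t n ^ 2)) →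
      ∀ t : ℝ,
        HasDerivAt (fun s => (1 / 2) * ∑ n, utilde s n ^ 2)
          (∑ n, utilde t n * utilde' t n) t ∧
        ∑ n, utilde t n * utilde' t n ≤
          -(2 / τ) * (1 - α * δ) * ((1 / 2) * ∑ n, utilde t n ^ 2)) := by
  simp only [sum_sq_eq_dotProduct_self] at hRIP ⊢
  let W : Submodule ℝ (Fin N → ℝ) := Submodule.pi Sᶜ fun _ => ⊥
  have mem_W {x : Fin N → ℝ} : x ∈ W ↔ ∀ n, n ∉ S → x n = 0 := by
    simp [W, Submodule.mem_pi]
  have hW : ∀ x ∈ W, |x ⬝ᵥ (Φᵀ * Φ - 1) *ᵥ x| ≤ δ * (x ⬝ᵥ x) := fun x hx =>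
    abs_dotProduct_gram_sub_one_mulVec_le (hRIP x (mem_W.mp hx))
  have hG : (Φᵀ * Φ - 1).IsSymm :=
    IsSymm.sub (by rw [IsSymm, transpose_mul, transpose_transpose]) isSymm_one
  have hsq {u a : Fin N → ℝ} (h : √(a ⬝ᵥ a) ≤ α * √(u ⬝ᵥ u)) : a ⬝ᵥ a ≤ α ^ 2 * (u ⬝ᵥ u) := by
    have hu : 0 ≤ u ⬝ᵥ u := by simpa using dotProduct_self_star_nonneg u
    rw [Real.sqrt_le_iff, mul_pow, Real.sq_sqrt hu] at h
    exact h.2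
  have coercive : ∀ u a : Fin N → ℝ, (∀ n, n ∉ S → u n = 0) → (∀ n, n ∉ S → a n = 0) →
      √(a ⬝ᵥ a) ≤ α * √(u ⬝ᵥ u) → (1 - α * δ) * (u ⬝ᵥ u) ≤ u ⬝ᵥ (u + (Φᵀ * Φ - 1) *ᵥ a) :=
    fun u a hu ha h => hG.le_dotProduct_add_mulVec hW hδ hα (mem_W.mpr hu) (mem_W.mpr ha) (hsq h)
  refine ⟨coercive, fun u u' a hu' hode hu ha hua t => ⟨?_, ?_⟩⟩
  · simpa only [sum_sq_eq_dotProduct_self] using hasDerivAt_half_sum_sq (hu' t)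
  · calc u t ⬝ᵥ u' t = -τ⁻¹ * (u t ⬝ᵥ (u t + (Φᵀ * Φ - 1) *ᵥ a t)) :=
          dotProduct_eq_of_smul_eq_neg_sub hτ.ne' (hode t)
      _ ≤ -τ⁻¹ * ((1 - α * δ) * (u t ⬝ᵥ u t)) :=
          mul_le_mul_of_nonpos_left (coercive _ _ (hu t) (ha t) (hua t))
            (neg_nonpos.mpr (inv_nonneg.mpr hτ.le))
      _ = -(2 / τ) * (1 - α * δ) * (1 / 2 * (u t ⬝ᵥ u t)) := by ring

/-- under the restricted-isometry-type bound with constant `δ`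
on vectors supported on `S`, and `α > 0` with `αδ < 1`, for `ũ, ã` supported
on `S` with `‖ã‖₂ ≤ α‖ũ‖₂` one has
`ũᵀ(ũ + (ΦᵀΦ − I)ã) ≥ (1 − αδ)‖ũ‖₂²`; consequently, along a trajectory with
`τ ũ̇ = −ũ − (ΦᵀΦ − I)ã`, the energy `E = (1/2)‖ũ‖₂²` satisfies
`Ė ≤ −(2/τ)(1 − αδ)E`. -/
theorem stmt15 {M N : ℕ} (hM : 0 < M) (hN : 0 < N)
    (Φ : Matrix (Fin M) (Fin N) ℝ) (τ : ℝ) (hτ : 0 < τ)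
    (S : Set (Fin N)) (δ α : ℝ) (hδ : 0 ≤ δ) (hα : 0 < α) (hαδ : α * δ < 1)
    (hRIP : ∀ x : Fin N → ℝ, (∀ n : Fin N, n ∉ S → x n = 0) →
      (1 - δ) * ∑ n, x n ^ 2 ≤ ∑ m, ((Φ *ᵥ x) m) ^ 2 ∧
        ∑ m, ((Φ *ᵥ x) m) ^ 2 ≤ (1 + δ) * ∑ n, x n ^ 2) :
    (∀ utilde atilde : Fin N → ℝ,
      (∀ n : Fin N, n ∉ S → utilde n = 0) →
      (∀ n : Fin N, n ∉ S → atilde n = 0) →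
      Real.sqrt (∑ n, atilde n ^ 2) ≤ α * Real.sqrt (∑ n, utilde n ^ 2) →
      (1 - α * δ) * ∑ n, utilde n ^ 2 ≤
        utilde ⬝ᵥ (utilde + (Φᵀ * Φ - 1) *ᵥ atilde))
    ∧
    (∀ utilde utilde' atilde : ℝ → Fin N → ℝ,
      (∀ t : ℝ, HasDerivAt utilde (utilde' t) t) →
      (∀ t : ℝ, τ • utilde' t = -(utilde t) - (Φᵀ * Φ - 1) *ᵥ atilde t) →
      (∀ t : ℝ, ∀ n : Fin N, n ∉ S → utilde t n = 0) →
      (∀ t : ℝ, ∀ n : Fin N, n ∉ S → atilde t n = 0) →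
      (∀ t : ℝ, Real.sqrt (∑ n, atilde t n ^ 2) ≤
        α * Real.sqrt (∑ n, utilde t n ^ 2)) →
      ∀ t : ℝ,
        HasDerivAt (fun s => (1 / 2) * ∑ n, utilde s n ^ 2)
          (∑ n, utilde t n * utilde' t n) t ∧
        ∑ n, utilde t n * utilde' t n ≤
          -(2 / τ) * (1 - α * δ) * ((1 / 2) * ∑ n, utilde t n ^ 2)) :=
  stmt15_general Φ τ hτ S δ α hδ hα hRIP
end
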